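/- For n ≥ 2, ζ = 2π/n, α ≥ 1, and integers k ≥ 1: s_{k+1} - 2s_k + s_{k-1} = 2s₁ - s̄_k, where s_k and s̄_k are as defined. -/

import Mathlib

/-!
The second difference of `y ↦ sin² y` with step `x` is
`2 sin² x cos 2y = 2 sin² x - 4 sin² x sin² y`. Applied at `y = k x` with `x = jπ/n` and divided by
`sin^{α+1} x`, the first term gives the summand of `2 s₁` and the second, after cancelling `sin² x`,
four times the summand of `s̄_k`; the factor `4` is absorbed by `2^{-(α-2)} = 4 · 2^{-α}`.
-/

open Finset

/-- The sum `s_k = 2^{-α} Σ_{j=1}^{n-1} sin²(kjζ/2)/sin^{α+1}(jζ/2)` with `ζ = 2π/n`. -/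
noncomputable def sSum (n : ℕ) (α : ℝ) (k : ℕ) : ℝ :=
  2 ^ (-α) * ∑ j ∈ Finset.Icc 1 (n - 1),
    Real.sin (k * j * (2 * Real.pi / n) / 2) ^ 2 /
      Real.sin (j * (2 * Real.pi / n) / 2) ^ (α + 1)

open Real

lemma sin_sq_add_sub_two_mul_sin_sq_add_sin_sq_sub (x y : ℝ) :
    sin (y + x) ^ 2 - 2 * sin y ^ 2 + sin (y - x) ^ 2
      = 2 * sin x ^ 2 - 4 * sin x ^ 2 * sin y ^ 2 := by
  rw [sin_add, sin_sub]
  linear_combination 2 * sin y ^ 2 * sin_sq_add_cos_sq x + 2 * sin x ^ 2 * sin_sq_add_cos_sq y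

lemma sum_sin_sq_div_rpow_second_difference {ι : Type*} (s : Finset ι) (x : ι → ℝ)
    (hx : ∀ i ∈ s, 0 < sin (x i)) (α : ℝ) (k : ℕ) (hk : 1 ≤ k) :
    ∑ i ∈ s, sin (↑(k + 1) * x i) ^ 2 / sin (x i) ^ (α + 1)
        - 2 * ∑ i ∈ s, sin (k * x i) ^ 2 / sin (x i) ^ (α + 1)
        + ∑ i ∈ s, sin (↑(k - 1) * x i) ^ 2 / sin (x i) ^ (α + 1)
      = 2 * ∑ i ∈ s, sin (x i) ^ 2 / sin (x i) ^ (α + 1)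
        - 4 * ∑ i ∈ s, sin (k * x i) ^ 2 / sin (x i) ^ (α - 1) := by
  simp only [mul_sum, ← sum_sub_distrib, ← sum_add_distrib]
  refine sum_congr rfl fun i hi ↦ ?_
  have hsplit : sin (x i) ^ (α + 1) = sin (x i) ^ (α - 1) * sin (x i) ^ 2 := by
    rw [show α + 1 = α - 1 + (2 : ℕ) by push_cast; ring, rpow_add_natCast (hx i hi).ne']
  have hsucc : (↑(k + 1) : ℝ) * x i = k * x i + x i := by push_cast; ring
  have hpred : (↑(k - 1) : ℝ) * x i = k * x i - x i := by push_cast [Nat.cast_sub hk]; ring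
  have := hx i hi
  rw [hsucc, hpred, ← mul_div_assoc, ← sub_div, ← add_div,
    sin_sq_add_sub_two_mul_sin_sq_add_sin_sq_sub, hsplit]
  field_simp

lemma sSum_eq (n : ℕ) (α : ℝ) (k : ℕ) :
    sSum n α k =
      2 ^ (-α) * ∑ j ∈ Icc 1 (n - 1), sin (k * (j * π / n)) ^ 2 / sin (j * π / n) ^ (α + 1) := by
  unfold sSum
  congr 1
  refine sum_congr rfl fun j _ ↦ ?_
  ring_nf

lemma sin_mul_pi_div_pos {j n : ℕ} (hj : 0 < j) (hjn : j < n) : 0 < sin (j * π / n) := by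
  have hn : (0 : ℝ) < n := by exact_mod_cast hj.trans hjn
  apply sin_pos_of_pos_of_lt_pi (by positivity)
  rw [div_lt_iff₀ hn, mul_comm π]
  exact mul_lt_mul_of_pos_right (Nat.cast_lt.mpr hjn) pi_pos

theorem stmt9_general (n : ℕ) (α : ℝ) (k : ℕ) (hk : 1 ≤ k) :
    sSum n α (k + 1) - 2 * sSum n α k + sSum n α (k - 1)
      = 2 * sSum n α 1 - sSum n (α - 2) k := by
  have hsin : ∀ j ∈ Icc 1 (n - 1), 0 < sin (j * π / n) := fun j hj ↦ by
    rw [mem_Icc] at hj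
    exact sin_mul_pi_div_pos (by omega) (by omega)
  have htwo : (2 : ℝ) ^ (-(α - 2)) = 4 * 2 ^ (-α) := by
    rw [show -(α - 2) = -α + (2 : ℕ) by push_cast; ring, rpow_add_natCast two_ne_zero]
    ring
  simp only [sSum_eq, htwo, show α - 2 + 1 = α - 1 by ring, Nat.cast_one, one_mul]
  linear_combination (2 : ℝ) ^ (-α) *
    sum_sin_sq_div_rpow_second_difference _ _ hsin α k hk

theorem stmt9 (n : ℕ) (hn : 2 ≤ n) (α : ℝ) (hα : 1 ≤ α) (k : ℕ) (hk : 1 ≤ k) :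
    sSum n α (k + 1) - 2 * sSum n α k + sSum n α (k - 1)
      = 2 * sSum n α 1 - sSum n (α - 2) k :=
  stmt9_general n α k hk
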